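/- Let H and H' be self-adjoint operators on a finite-dimensional Hilbert space with H' − H = cP for a rank-r orthogonal projection P and c ∈ ℝ. Then for every interval I ⊆ ℝ, |tr E_H(I) − tr E_{H'}(I)| ≤ r, where E_H(I) is the spectral projection of H onto I. -/
import Mathlib


open Matrix

open Matrix Submodule FiniteDimensional

namespace RankPerturb

variable {N : ℕ} {A : Matrix (Fin N) (Fin N) ℂ}

local notation "⟪" x ", " y "⟫" => @inner ℂ _ _ x y

/-- Span of the eigenvectors whose eigenvalues lie in `p`. -/
noncomputable def espace (hA : A.IsHermitian) (p : Set ℝ) :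
    Submodule ℂ (EuclideanSpace ℂ (Fin N)) :=
  Submodule.span ℂ (Set.range
    (fun i : {i : Fin N // hA.eigenvalues i ∈ p} => hA.eigenvectorBasis i.1))

lemma finrank_espace (hA : A.IsHermitian) (p : Set ℝ) :
    Module.finrank ℂ (espace hA p) = Nat.card {i : Fin N // hA.eigenvalues i ∈ p} := by
  classical
  rw [Nat.card_eq_fintype_card]
  exact finrank_span_eq_card
    ((hA.eigenvectorBasis.orthonormal.comp _ Subtype.val_injective).linearIndependent)

lemma inner_eq_zero_of_mem_espace (hA : A.IsHermitian) (p : Set ℝ) {x : EuclideanSpace ℂ (Fin N)}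
    (hx : x ∈ espace hA p) {j : Fin N} (hj : hA.eigenvalues j ∉ p) :
    ⟪hA.eigenvectorBasis j, x⟫ = 0 := by
  induction hx using Submodule.span_induction with
  | mem y hy =>
      obtain ⟨i, rfl⟩ := hy
      have hne : i.1 ≠ j := fun h => hj (h ▸ i.2)
      exact hA.eigenvectorBasis.orthonormal.2 (Ne.symm hne)
  | zero => simp
  | add y z _ _ hy hz => rw [inner_add_right, hy, hz, add_zero]
  | smul a y _ hy => rw [inner_smul_right, hy, mul_zero]

lemma toEuclideanLin_eigenvectorBasis (hA : A.IsHermitian) (j : Fin N) :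
    Matrix.toEuclideanLin A (hA.eigenvectorBasis j)
      = (hA.eigenvalues j : ℂ) • hA.eigenvectorBasis j := by
  have h := hA.mulVec_eigenvectorBasis j
  rw [toEuclideanLin_apply]
  ext i
  have := congrFun h i
  simpa [WithLp.equiv] using this

end RankPerturb

namespace RankPerturb2
open RankPerturb
variable {N : ℕ} {A : Matrix (Fin N) (Fin N) ℂ}
local notation "⟪" x ", " y "⟫" => @inner ℂ _ _ x y

lemma inner_toEuclideanLin_expand (hA : A.IsHermitian) (x : EuclideanSpace ℂ (Fin N)) :
    (⟪x, Matrix.toEuclideanLin A x⟫).re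
      = ∑ j, hA.eigenvalues j * Complex.normSq ⟪hA.eigenvectorBasis j, x⟫ := by
  have hsym := (Matrix.isHermitian_iff_isSymmetric.1 hA)
  have h1 := (hA.eigenvectorBasis.sum_inner_mul_inner x (Matrix.toEuclideanLin A x)).symm
  rw [h1]
  rw [Complex.re_sum]
  congr 1
  ext j
  have h2 : ⟪hA.eigenvectorBasis j, Matrix.toEuclideanLin A x⟫
      = (hA.eigenvalues j : ℂ) * ⟪hA.eigenvectorBasis j, x⟫ := by
    rw [← hsym, toEuclideanLin_eigenvectorBasis, inner_smul_left]
    simp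
  rw [h2, ← inner_conj_symm x]
  set c := ⟪hA.eigenvectorBasis j, x⟫
  have : (starRingEnd ℂ) c * ((hA.eigenvalues j : ℂ) * c)
      = (hA.eigenvalues j : ℂ) * ((starRingEnd ℂ) c * c) := by ring
  rw [this]
  rw [Complex.conj_mul']
  simp [← Complex.ofReal_pow, Complex.sq_norm, ← Complex.ofReal_mul]

lemma inner_self_expand (hA : A.IsHermitian) (x : EuclideanSpace ℂ (Fin N)) :
    (⟪x, x⟫).re = ∑ j, Complex.normSq ⟪hA.eigenvectorBasis j, x⟫ := by
  have h1 := (hA.eigenvectorBasis.sum_inner_mul_inner x x).symm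
  rw [h1, Complex.re_sum]
  congr 1
  ext j
  rw [← inner_conj_symm x]
  rw [Complex.conj_mul']
  simp [← Complex.ofReal_pow, Complex.sq_norm, ← Complex.ofReal_mul]

end RankPerturb2

namespace RankPerturb3
open RankPerturb RankPerturb2
variable {N : ℕ} {A : Matrix (Fin N) (Fin N) ℂ}
local notation "⟪" x ", " y "⟫" => @inner ℂ _ _ x y

lemma exists_inner_ne_zero (hA : A.IsHermitian) {x : EuclideanSpace ℂ (Fin N)} (hx : x ≠ 0) :
    ∃ j, ⟪hA.eigenvectorBasis j, x⟫ ≠ 0 := by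
  by_contra h
  push_neg at h
  apply hx
  have := (hA.eigenvectorBasis.sum_repr' x).symm
  rw [this]
  simp [h]

lemma rayleigh_le (hA : A.IsHermitian) {p : Set ℝ} {t : ℝ} (hp : ∀ s ∈ p, s ≤ t)
    {x : EuclideanSpace ℂ (Fin N)} (hx : x ∈ espace hA p) :
    (⟪x, Matrix.toEuclideanLin A x⟫).re ≤ t * (⟪x, x⟫).re := by
  rw [inner_toEuclideanLin_expand hA, inner_self_expand hA, Finset.mul_sum]
  apply Finset.sum_le_sum
  intro j _
  by_cases hj : hA.eigenvalues j ∈ p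
  · exact mul_le_mul_of_nonneg_right (hp _ hj) (Complex.normSq_nonneg _)
  · rw [inner_eq_zero_of_mem_espace hA p hx hj]; simp

lemma rayleigh_ge (hA : A.IsHermitian) {p : Set ℝ} {t : ℝ} (hp : ∀ s ∈ p, t ≤ s)
    {x : EuclideanSpace ℂ (Fin N)} (hx : x ∈ espace hA p) :
    t * (⟪x, x⟫).re ≤ (⟪x, Matrix.toEuclideanLin A x⟫).re := by
  rw [inner_toEuclideanLin_expand hA, inner_self_expand hA, Finset.mul_sum]
  apply Finset.sum_le_sum
  intro j _
  by_cases hj : hA.eigenvalues j ∈ p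
  · exact mul_le_mul_of_nonneg_right (hp _ hj) (Complex.normSq_nonneg _)
  · rw [inner_eq_zero_of_mem_espace hA p hx hj]; simp

lemma rayleigh_lt (hA : A.IsHermitian) {p : Set ℝ} {t : ℝ} (hp : ∀ s ∈ p, s < t)
    {x : EuclideanSpace ℂ (Fin N)} (hx : x ∈ espace hA p) (hx0 : x ≠ 0) :
    (⟪x, Matrix.toEuclideanLin A x⟫).re < t * (⟪x, x⟫).re := by
  rw [inner_toEuclideanLin_expand hA, inner_self_expand hA, Finset.mul_sum]
  obtain ⟨j₀, hj₀⟩ := exists_inner_ne_zero hA hx0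
  have hj₀p : hA.eigenvalues j₀ ∈ p := by
    by_contra h
    exact hj₀ (inner_eq_zero_of_mem_espace hA p hx h)
  apply Finset.sum_lt_sum
  · intro j _
    by_cases hj : hA.eigenvalues j ∈ p
    · exact mul_le_mul_of_nonneg_right (le_of_lt (hp _ hj)) (Complex.normSq_nonneg _)
    · rw [inner_eq_zero_of_mem_espace hA p hx hj]; simp
  · refine ⟨j₀, Finset.mem_univ _, ?_⟩
    apply mul_lt_mul_of_pos_right (hp _ hj₀p)
    exact (Complex.normSq_pos).2 hj₀

lemma rayleigh_gt (hA : A.IsHermitian) {p : Set ℝ} {t : ℝ} (hp : ∀ s ∈ p, t < s)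
    {x : EuclideanSpace ℂ (Fin N)} (hx : x ∈ espace hA p) (hx0 : x ≠ 0) :
    t * (⟪x, x⟫).re < (⟪x, Matrix.toEuclideanLin A x⟫).re := by
  rw [inner_toEuclideanLin_expand hA, inner_self_expand hA, Finset.mul_sum]
  obtain ⟨j₀, hj₀⟩ := exists_inner_ne_zero hA hx0
  have hj₀p : hA.eigenvalues j₀ ∈ p := by
    by_contra h
    exact hj₀ (inner_eq_zero_of_mem_espace hA p hx h)
  apply Finset.sum_lt_sum
  · intro j _
    by_cases hj : hA.eigenvalues j ∈ p
    · exact mul_le_mul_of_nonneg_right (le_of_lt (hp _ hj)) (Complex.normSq_nonneg _)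
    · rw [inner_eq_zero_of_mem_espace hA p hx hj]; simp
  · refine ⟨j₀, Finset.mem_univ _, ?_⟩
    apply mul_lt_mul_of_pos_right (hp _ hj₀p)
    exact (Complex.normSq_pos).2 hj₀

end RankPerturb3

namespace RankPerturb4
open RankPerturb RankPerturb2 RankPerturb3 Module Submodule
variable {N : ℕ}
local notation "⟪" x ", " y "⟫" => @inner ℂ _ _ x y

lemma exists_ne_zero_mem_inf {S T : Submodule ℂ (EuclideanSpace ℂ (Fin N))}
    (h : N < finrank ℂ S + finrank ℂ T) :
    ∃ x : EuclideanSpace ℂ (Fin N), x ∈ S ⊓ T ∧ x ≠ 0 := by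
  apply Submodule.exists_mem_ne_zero_of_ne_bot
  intro hbot
  have h1 := Submodule.finrank_sup_add_finrank_inf_eq S T
  rw [hbot, finrank_bot, add_zero] at h1
  have h2 : finrank ℂ ↥(S ⊔ T) ≤ N := by
    simpa [finrank_euclideanSpace] using Submodule.finrank_le (S ⊔ T)
  omega

lemma finrank_inf_ge (S T : Submodule ℂ (EuclideanSpace ℂ (Fin N))) :
    finrank ℂ S + finrank ℂ T ≤ finrank ℂ ↥(S ⊓ T) + N := by
  have h1 := Submodule.finrank_sup_add_finrank_inf_eq S T
  have h2 : finrank ℂ ↥(S ⊔ T) ≤ N := by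
    simpa [finrank_euclideanSpace] using Submodule.finrank_le (S ⊔ T)
  omega

/-- The kernel of `P`, as a subspace of Euclidean space. -/
noncomputable def kerP (P : Matrix (Fin N) (Fin N) ℂ) :
    Submodule ℂ (EuclideanSpace ℂ (Fin N)) :=
  LinearMap.ker (Matrix.toEuclideanLin P)

lemma mem_kerP {P : Matrix (Fin N) (Fin N) ℂ} {x : EuclideanSpace ℂ (Fin N)} :
    x ∈ kerP P ↔ Matrix.toEuclideanLin P x = 0 := Iff.rfl

lemma finrank_kerP (P : Matrix (Fin N) (Fin N) ℂ) :
    finrank ℂ (kerP P) + P.rank = N := by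
  have h := LinearMap.finrank_range_add_finrank_ker (Matrix.toEuclideanLin P)
  rw [finrank_euclideanSpace, Fintype.card_fin] at h
  have hr : finrank ℂ (LinearMap.range (Matrix.toEuclideanLin P)) = P.rank := by
    rw [Matrix.rank]
    have he : Matrix.toEuclideanLin P
        = (WithLp.linearEquiv 2 ℂ (Fin N → ℂ)).symm.toLinearMap
            ∘ₗ (P.mulVecLin ∘ₗ (WithLp.linearEquiv 2 ℂ (Fin N → ℂ)).toLinearMap) := by
      ext x
      rfl
    rw [he, LinearMap.range_comp, LinearMap.range_comp, LinearEquiv.range,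
      Submodule.map_top, LinearEquiv.finrank_map_eq]
  rw [kerP]
  omega

end RankPerturb4

namespace RankPerturb5
open RankPerturb RankPerturb2 RankPerturb3 RankPerturb4 Module Submodule
variable {N : ℕ} {A B P : Matrix (Fin N) (Fin N) ℂ} {c : ℝ}
local notation "⟪" x ", " y "⟫" => @inner ℂ _ _ x y

lemma quadP_eq (hP : P.IsHermitian) (hProj : P * P = P) (x : EuclideanSpace ℂ (Fin N)) :
    ⟪x, Matrix.toEuclideanLin P x⟫
      = ⟪Matrix.toEuclideanLin P x, Matrix.toEuclideanLin P x⟫ := by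
  have hPP : Matrix.toEuclideanLin P (Matrix.toEuclideanLin P x)
      = Matrix.toEuclideanLin P x := by
    rw [Matrix.toEuclideanLin_apply, Matrix.toEuclideanLin_apply]
    ext i
    show (P *ᵥ (P *ᵥ x)) i = (P *ᵥ x) i
    rw [Matrix.mulVec_mulVec, hProj]
  conv_lhs => rw [← hPP]
  exact ((Matrix.isHermitian_iff_isSymmetric.1 hP) x (Matrix.toEuclideanLin P x)).symm

lemma quadP_nonneg (hP : P.IsHermitian) (hProj : P * P = P) (x : EuclideanSpace ℂ (Fin N)) :
    0 ≤ (⟪x, Matrix.toEuclideanLin P x⟫).re := by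
  rw [quadP_eq hP hProj, inner_self_expand hP]
  exact Finset.sum_nonneg fun j _ => Complex.normSq_nonneg _

lemma quadB_eq (hBe : B = A + (c : ℂ) • P) (x : EuclideanSpace ℂ (Fin N)) :
    (⟪x, Matrix.toEuclideanLin B x⟫).re
      = (⟪x, Matrix.toEuclideanLin A x⟫).re + c * (⟪x, Matrix.toEuclideanLin P x⟫).re := by
  subst hBe
  rw [map_add, _root_.map_smul, LinearMap.add_apply, LinearMap.smul_apply, inner_add_right,
    inner_smul_right]
  simp [Complex.add_re, Complex.mul_re]

lemma card_compl (f : Fin N → ℝ) (p q : Set ℝ) (h : ∀ s, s ∈ q ↔ s ∉ p) :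
    Nat.card {i // f i ∈ q} + Nat.card {i // f i ∈ p} = N := by
  classical
  simp_rw [Nat.card_eq_fintype_card]
  have e : {i // f i ∈ q} ≃ {i // ¬ (f i ∈ p)} :=
    Equiv.subtypeEquivRight fun i => h (f i)
  rw [Fintype.card_congr e, Fintype.card_subtype_compl]
  have := Fintype.card_subtype_le (fun i : Fin N => f i ∈ p)
  simp only [Fintype.card_fin] at *
  omega

end RankPerturb5

namespace RankPerturb6
open RankPerturb RankPerturb2 RankPerturb3 RankPerturb4 RankPerturb5 Module Submodule
variable {N : ℕ} {A B P : Matrix (Fin N) (Fin N) ℂ} {c : ℝ}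
local notation "⟪" x ", " y "⟫" => @inner ℂ _ _ x y

lemma L1_le (hA : A.IsHermitian) (hB : B.IsHermitian) (hP : P.IsHermitian)
    (hProj : P * P = P) (hc : 0 ≤ c) (hBe : B = A + (c : ℂ) • P) (t : ℝ) :
    Nat.card {i // hB.eigenvalues i ∈ Set.Iic t}
      ≤ Nat.card {i // hA.eigenvalues i ∈ Set.Iic t} := by
  by_contra hlt
  push_neg at hlt
  have hcompl := card_compl hA.eigenvalues (Set.Iic t) (Set.Ioi t)
    (fun s => by simp [not_le])
  have hfS := finrank_espace hB (Set.Iic t)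
  have hfT := finrank_espace hA (Set.Ioi t)
  obtain ⟨x, hx, hx0⟩ := exists_ne_zero_mem_inf
    (S := espace hB (Set.Iic t)) (T := espace hA (Set.Ioi t)) (by omega)
  have h1 : (⟪x, Matrix.toEuclideanLin B x⟫).re ≤ t * (⟪x, x⟫).re :=
    rayleigh_le hB (fun s hs => hs) hx.1
  have h2 : t * (⟪x, x⟫).re < (⟪x, Matrix.toEuclideanLin A x⟫).re :=
    rayleigh_gt hA (fun s hs => hs) hx.2 hx0
  have h3 := quadB_eq hBe x
  have h4 := quadP_nonneg hP hProj x
  nlinarith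

lemma L1_lt (hA : A.IsHermitian) (hB : B.IsHermitian) (hP : P.IsHermitian)
    (hProj : P * P = P) (hc : 0 ≤ c) (hBe : B = A + (c : ℂ) • P) (t : ℝ) :
    Nat.card {i // hB.eigenvalues i ∈ Set.Iio t}
      ≤ Nat.card {i // hA.eigenvalues i ∈ Set.Iio t} := by
  by_contra hlt
  push_neg at hlt
  have hcompl := card_compl hA.eigenvalues (Set.Iio t) (Set.Ici t)
    (fun s => by simp [not_lt])
  have hfS := finrank_espace hB (Set.Iio t)
  have hfT := finrank_espace hA (Set.Ici t)
  obtain ⟨x, hx, hx0⟩ := exists_ne_zero_mem_inf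
    (S := espace hB (Set.Iio t)) (T := espace hA (Set.Ici t)) (by omega)
  have h1 : (⟪x, Matrix.toEuclideanLin B x⟫).re < t * (⟪x, x⟫).re :=
    rayleigh_lt hB (fun s hs => hs) hx.1 hx0
  have h2 : t * (⟪x, x⟫).re ≤ (⟪x, Matrix.toEuclideanLin A x⟫).re :=
    rayleigh_ge hA (fun s hs => hs) hx.2
  have h3 := quadB_eq hBe x
  have h4 := quadP_nonneg hP hProj x
  nlinarith

lemma L2_le (hA : A.IsHermitian) (hB : B.IsHermitian)
    (hProj : P * P = P) (hBe : B = A + (c : ℂ) • P) (t : ℝ) :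
    Nat.card {i // hA.eigenvalues i ∈ Set.Iic t}
      ≤ Nat.card {i // hB.eigenvalues i ∈ Set.Iic t} + P.rank := by
  by_contra hlt
  push_neg at hlt
  have hcompl := card_compl hB.eigenvalues (Set.Iic t) (Set.Ioi t)
    (fun s => by simp [not_le])
  have hfS := finrank_espace hA (Set.Iic t)
  have hfT := finrank_espace hB (Set.Ioi t)
  have hker := finrank_kerP P
  have hinf := finrank_inf_ge (espace hA (Set.Iic t)) (kerP P)
  obtain ⟨x, hx, hx0⟩ := exists_ne_zero_mem_inf
    (S := espace hA (Set.Iic t) ⊓ kerP P) (T := espace hB (Set.Ioi t)) (by omega)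
  have h1 : (⟪x, Matrix.toEuclideanLin A x⟫).re ≤ t * (⟪x, x⟫).re :=
    rayleigh_le hA (fun s hs => hs) hx.1.1
  have h2 : t * (⟪x, x⟫).re < (⟪x, Matrix.toEuclideanLin B x⟫).re :=
    rayleigh_gt hB (fun s hs => hs) hx.2 hx0
  have h3 := quadB_eq hBe x
  have h5 : Matrix.toEuclideanLin P x = 0 := hx.1.2
  rw [h5] at h3
  simp only [inner_zero_right, Complex.zero_re, mul_zero, add_zero] at h3
  linarith

lemma L2_lt (hA : A.IsHermitian) (hB : B.IsHermitian)
    (hProj : P * P = P) (hBe : B = A + (c : ℂ) • P) (t : ℝ) :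
    Nat.card {i // hA.eigenvalues i ∈ Set.Iio t}
      ≤ Nat.card {i // hB.eigenvalues i ∈ Set.Iio t} + P.rank := by
  by_contra hlt
  push_neg at hlt
  have hcompl := card_compl hB.eigenvalues (Set.Iio t) (Set.Ici t)
    (fun s => by simp [not_lt])
  have hfS := finrank_espace hA (Set.Iio t)
  have hfT := finrank_espace hB (Set.Ici t)
  have hker := finrank_kerP P
  have hinf := finrank_inf_ge (espace hA (Set.Iio t)) (kerP P)
  obtain ⟨x, hx, hx0⟩ := exists_ne_zero_mem_inf
    (S := espace hA (Set.Iio t) ⊓ kerP P) (T := espace hB (Set.Ici t)) (by omega)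
  have h1 : (⟪x, Matrix.toEuclideanLin A x⟫).re < t * (⟪x, x⟫).re :=
    rayleigh_lt hA (fun s hs => hs) hx.1.1 hx0
  have h2 : t * (⟪x, x⟫).re ≤ (⟪x, Matrix.toEuclideanLin B x⟫).re :=
    rayleigh_ge hB (fun s hs => hs) hx.2
  have h3 := quadB_eq hBe x
  have h5 : Matrix.toEuclideanLin P x = 0 := hx.1.2
  rw [h5] at h3
  simp only [inner_zero_right, Complex.zero_re, mul_zero, add_zero] at h3
  linarith

end RankPerturb6

namespace RankPerturb7
open RankPerturb RankPerturb6 Module Submodule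

lemma card_split {N : ℕ} (p q : Fin N → Prop) (h : ∀ i, q i → p i) :
    Nat.card {i // p i ∧ ¬ q i} + Nat.card {i // q i} = Nat.card {i // p i} := by
  classical
  rw [← Nat.card_sum]
  apply Nat.card_congr
  exact { toFun := Sum.elim (fun x => ⟨x.1, x.2.1⟩) (fun x => ⟨x.1, h _ x.2⟩),
          invFun := fun x => if hq : q x.1 then Sum.inr ⟨x.1, hq⟩ else Sum.inl ⟨x.1, x.2, hq⟩,
          left_inv := by
            rintro (⟨x, hx1, hx2⟩ | ⟨x, hx⟩)
            · simp [hx2]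
            · simp [hx],
          right_inv := by rintro ⟨x, hx⟩; by_cases hq : q x <;> simp [hq] }

/-- Main lemma: the monotone (`c ≥ 0`) case. -/
lemma main {N : ℕ} {A B P : Matrix (Fin N) (Fin N) ℂ} {c : ℝ} {r : ℕ}
    (hA : A.IsHermitian) (hB : B.IsHermitian) (hP : P.IsHermitian)
    (hProj : P * P = P) (hr : P.rank = r) (hc : 0 ≤ c)
    (hBe : B = A + (c : ℂ) • P)
    (I : Set ℝ) (hI : I.OrdConnected) :
    |(Nat.card {i : Fin N // hA.eigenvalues i ∈ I} : ℤ)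
      - (Nat.card {i : Fin N // hB.eigenvalues i ∈ I} : ℤ)| ≤ (r : ℤ) := by
  classical
  by_cases hne : (∃ i, hA.eigenvalues i ∈ I) ∨ (∃ i, hB.eigenvalues i ∈ I)
  · -- choose endpoints
    set F : Finset ℝ := (Finset.univ.filter (fun i => hA.eigenvalues i ∈ I)).image hA.eigenvalues
        ∪ (Finset.univ.filter (fun i => hB.eigenvalues i ∈ I)).image hB.eigenvalues with hF
    have hFne : F.Nonempty := by
      rcases hne with ⟨i, hi⟩ | ⟨i, hi⟩
      · exact ⟨hA.eigenvalues i, by simp [hF, Finset.mem_union, Finset.mem_image]; left; exact ⟨i, hi, rfl⟩⟩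
      · exact ⟨hB.eigenvalues i, by simp [hF, Finset.mem_union, Finset.mem_image]; right; exact ⟨i, hi, rfl⟩⟩
    set a := F.min' hFne with ha'
    set b := F.max' hFne with hb'
    have hFI : ∀ s ∈ F, s ∈ I := by
      intro s hs
      simp only [hF, Finset.mem_union, Finset.mem_image, Finset.mem_filter, Finset.mem_univ,
        true_and] at hs
      rcases hs with ⟨i, hi, rfl⟩ | ⟨i, hi, rfl⟩ <;> exact hi
    have haI : a ∈ I := hFI _ (F.min'_mem hFne)
    have hbI : b ∈ I := hFI _ (F.max'_mem hFne)
    have hab : a ≤ b := F.min'_le _ (F.max'_mem hFne)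
    -- characterization
    have key : ∀ (M : Matrix (Fin N) (Fin N) ℂ) (hM : M.IsHermitian),
        (∀ i, hM.eigenvalues i ∈ I → hM.eigenvalues i ∈ F) →
        ∀ i, hM.eigenvalues i ∈ I ↔ (hM.eigenvalues i ∈ Set.Iic b ∧ ¬ hM.eigenvalues i ∈ Set.Iio a) := by
      intro M hM hMF i
      constructor
      · intro hi
        have hmem := hMF i hi
        exact ⟨F.le_max' _ hmem, not_lt.2 (F.min'_le _ hmem)⟩
      · rintro ⟨h1, h2⟩
        simp only [Set.mem_Iic] at h1
        simp only [Set.mem_Iio, not_lt] at h2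
        exact hI.out haI hbI ⟨h2, h1⟩
    have hAF : ∀ i, hA.eigenvalues i ∈ I → hA.eigenvalues i ∈ F := by
      intro i hi
      simp only [hF, Finset.mem_union, Finset.mem_image, Finset.mem_filter, Finset.mem_univ,
        true_and]
      exact Or.inl ⟨i, hi, rfl⟩
    have hBF : ∀ i, hB.eigenvalues i ∈ I → hB.eigenvalues i ∈ F := by
      intro i hi
      simp only [hF, Finset.mem_union, Finset.mem_image, Finset.mem_filter, Finset.mem_univ,
        true_and]
      exact Or.inr ⟨i, hi, rfl⟩
    -- counting split for each operator
    have split : ∀ (M : Matrix (Fin N) (Fin N) ℂ) (hM : M.IsHermitian),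
        (∀ i, hM.eigenvalues i ∈ I → hM.eigenvalues i ∈ F) →
        Nat.card {i // hM.eigenvalues i ∈ I} + Nat.card {i // hM.eigenvalues i ∈ Set.Iio a}
          = Nat.card {i // hM.eigenvalues i ∈ Set.Iic b} := by
      intro M hM hMF
      have e : Nat.card {i // hM.eigenvalues i ∈ I}
          = Nat.card {i // hM.eigenvalues i ∈ Set.Iic b ∧ ¬ hM.eigenvalues i ∈ Set.Iio a} :=
        Nat.card_congr (Equiv.subtypeEquivRight (key M hM hMF))
      rw [e]
      exact card_split _ _ (fun i hi => by
        simp only [Set.mem_Iio] at hi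
        simp only [Set.mem_Iic]
        exact le_trans (le_of_lt hi) hab)
    have sA := split A hA hAF
    have sB := split B hB hBF
    have d1 := L1_le hA hB hP hProj hc hBe b
    have d2 := L2_le hA hB hProj hBe b
    have d3 := L1_lt hA hB hP hProj hc hBe a
    have d4 := L2_lt hA hB hProj hBe a
    rw [hr] at d2 d4
    rw [abs_le]
    omega
  · push_neg at hne
    have h1 : Nat.card {i // hA.eigenvalues i ∈ I} = 0 := by
      simp only [Nat.card_eq_zero]
      left
      exact ⟨fun x => hne.1 x.1 x.2⟩
    have h2 : Nat.card {i // hB.eigenvalues i ∈ I} = 0 := by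
      simp only [Nat.card_eq_zero]
      left
      exact ⟨fun x => hne.2 x.1 x.2⟩
    rw [h1, h2]
    simp

end RankPerturb7

/-- Rank-`r` perturbation bound on eigenvalue counting: if `H' = H + cP` with `P`
an orthogonal projection of rank `r` and `c ∈ ℝ`, then for every interval `I ⊆ ℝ`
the numbers of eigenvalues (with multiplicity) of `H` and `H'` in `I` differ by at
most `r`. -/
theorem rank_perturbation_counting (N : ℕ)
    (H P : Matrix (Fin N) (Fin N) ℂ) (c : ℝ) (r : ℕ)
    (hH : H.IsHermitian) (hP : P.IsHermitian) (hProj : P * P = P)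
    (hr : P.rank = r)
    (hH' : (H + (c : ℂ) • P).IsHermitian)
    (I : Set ℝ) (hI : I.OrdConnected) :
    |(Nat.card {i : Fin N // hH.eigenvalues i ∈ I} : ℤ)
      - (Nat.card {i : Fin N // hH'.eigenvalues i ∈ I} : ℤ)| ≤ (r : ℤ) := by
  rcases le_or_gt 0 c with hc | hc
  · exact RankPerturb7.main hH hH' hP hProj hr hc rfl I hI
  · have hBe : H = (H + (c : ℂ) • P) + ((-c : ℝ) : ℂ) • P := by
      push_cast
      module
    have h := RankPerturb7.main hH' hH hP hProj hr (by linarith) hBe I hI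
    rw [abs_sub_comm] at h
    exact h
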